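/- arXiv:1510.05792 — 2 statements merged into one kernel-verified Lean document; each statement's English description precedes it below -/
import Mathlib

section
/- Let X be a complex Banach space, let A, B : X → X be bounded linear operators, let U ⊆ X be a finite-dimensional subspace invariant under A (i.e., A(U) ⊆ U), and let c ∈ ℂ, r > 0, C₁, C₂ > 0, ε ≥ 0 be such that: for every z with |z − c| = r both z·id − A and z·id − B are invertible with ‖(z·id − A)⁻¹‖ ≤ C₁ and ‖(z·id − B)⁻¹‖ ≤ C₂, and ‖(A − B)x‖ ≤ ε‖x‖ for all x ∈ U. Let P_A and P_B be the Riesz projections of A and B along the circle |z − c| = r. Then for all x ∈ U, ‖(P_A − P_B)x‖ ≤ r·C₁·C₂·ε·‖x‖. -/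
/-! By the second resolvent identity, `P_A - P_B = (2πi)⁻¹ ∮ R_B(z) (A - B) R_A(z) dz`, where
`R_T(z) = (z - T)⁻¹`. For `x ∈ U` the vector `R_A(z) x` stays in `U`, because `z - A` is injective
and maps the finite-dimensional `U` into itself, hence onto itself. So on the circle the integrand
applied to `x` has norm at most `C₂ ε C₁ ‖x‖`, and the standard estimate of `(2πi)⁻¹ ∮` over a
circle of radius `r` contributes the factor `r`. -/

open Metric Complex spectrum

theorem ContinuousLinearMap.circleIntegral_apply {E F : Type*} [NormedAddCommGroup E]
    [NormedSpace ℂ E] [NormedAddCommGroup F] [NormedSpace ℂ F] {f : ℂ → E →L[ℂ] F} {c : ℂ}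
    {r : ℝ} (hf : CircleIntegrable f c r) (x : E) :
    (∮ z in C(c, r), f z) x = ∮ z in C(c, r), f z x := by
  simpa only [circleIntegral, smul_apply] using intervalIntegral_apply hf.out x

theorem ContinuousLinearMap.inverse_apply_mem {𝕜 E : Type*} [NontriviallyNormedField 𝕜]
    [NormedAddCommGroup E] [NormedSpace 𝕜 E] {T : E →L[𝕜] E} (hT : IsUnit T)
    {U : Submodule 𝕜 E} [FiniteDimensional 𝕜 U] (hU : ∀ x ∈ U, T x ∈ U) {x : E} (hx : x ∈ U) :
    Ring.inverse T x ∈ U := by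
  have hleft : Function.LeftInverse (Ring.inverse T : E →L[𝕜] E) T :=
    DFunLike.congr_fun (Ring.inverse_mul_cancel T hT)
  have hsurj : Function.Surjective ((T : E →ₗ[𝕜] E).restrict hU) :=
    LinearMap.injective_iff_surjective.1 fun u v huv =>
      Subtype.ext (hleft.injective (congrArg Subtype.val huv))
  obtain ⟨u, hu⟩ := hsurj ⟨x, hx⟩
  have hTu : T u = x := congrArg Subtype.val hu
  rw [← hTu, hleft u]
  exact u.2

theorem resolvent_apply_mem {X : Type*} [NormedAddCommGroup X] [NormedSpace ℂ X]
    {A : X →L[ℂ] X} {z : ℂ} (hz : z ∈ resolventSet ℂ A) {U : Submodule ℂ X}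
    [FiniteDimensional ℂ U] (hU : ∀ x ∈ U, A x ∈ U) {x : X} (hx : x ∈ U) :
    resolvent A z x ∈ U :=
  ContinuousLinearMap.inverse_apply_mem hz (fun y hy => by
    simpa only [Algebra.algebraMap_eq_smul_one, sub_apply, smul_apply, one_apply_eq_self]
      using U.sub_mem (U.smul_mem z hy) (hU y hy)) hx

section BanachAlgebra

variable {𝒜 : Type*} [NormedRing 𝒜] [NormedAlgebra ℂ 𝒜]

theorem spectrum.continuousOn_resolvent [CompleteSpace 𝒜] {a : 𝒜} {s : Set ℂ}
    (hs : s ⊆ resolventSet ℂ a) : ContinuousOn (resolvent a) s := fun _ hz =>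
  (hasDerivAt_resolvent_const_left (hs hz)).continuousAt.continuousWithinAt

theorem spectrum.resolvent_sub_resolvent' {a b : 𝒜} {z : ℂ} (ha : z ∈ resolventSet ℂ a)
    (hb : z ∈ resolventSet ℂ b) :
    resolvent a z - resolvent b z = resolvent b z * (a - b) * resolvent a z := by
  rw [← neg_sub, resolvent_sub_resolvent hb ha, ← neg_sub a b, mul_neg, neg_mul, neg_neg]

noncomputable def rieszProjection (a : 𝒜) (c : ℂ) (r : ℝ) : 𝒜 :=
  (2 * Real.pi * I : ℂ)⁻¹ • ∮ z in C(c, r), resolvent a z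

theorem rieszProjection_sub_rieszProjection [CompleteSpace 𝒜] {a b : 𝒜} {c : ℂ} {r : ℝ}
    (hr : 0 ≤ r) (ha : sphere c r ⊆ resolventSet ℂ a) (hb : sphere c r ⊆ resolventSet ℂ b) :
    rieszProjection a c r - rieszProjection b c r =
      (2 * Real.pi * I : ℂ)⁻¹ • ∮ z in C(c, r), resolvent b z * (a - b) * resolvent a z := by
  rw [rieszProjection, rieszProjection, ← smul_sub,
    ← circleIntegral.integral_sub ((continuousOn_resolvent ha).circleIntegrable hr)
      ((continuousOn_resolvent hb).circleIntegrable hr)]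
  congr 1
  exact circleIntegral.integral_congr hr fun z hz => resolvent_sub_resolvent' (ha hz) (hb hz)

end BanachAlgebra

theorem stmt_13_general {X : Type*} [NormedAddCommGroup X] [NormedSpace ℂ X] [CompleteSpace X]
    (A B : X →L[ℂ] X)
    (U : Submodule ℂ X) [FiniteDimensional ℂ U] (hU : ∀ x ∈ U, A x ∈ U)
    (c : ℂ) (r C₁ C₂ ε : ℝ)
    (hr : 0 < r) (hε : 0 ≤ ε)
    (hA : ∀ z : ℂ, ‖z - c‖ = r → IsUnit (z • (1 : X →L[ℂ] X) - A) ∧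
      ‖Ring.inverse (z • (1 : X →L[ℂ] X) - A)‖ ≤ C₁)
    (hB : ∀ z : ℂ, ‖z - c‖ = r → IsUnit (z • (1 : X →L[ℂ] X) - B) ∧
      ‖Ring.inverse (z • (1 : X →L[ℂ] X) - B)‖ ≤ C₂)
    (hAB : ∀ x ∈ U, ‖(A - B) x‖ ≤ ε * ‖x‖)
    (PA PB : X →L[ℂ] X)
    (hPA : PA = (2 * (Real.pi : ℂ) * Complex.I)⁻¹ •
      ∮ z in C(c, r), Ring.inverse (z • (1 : X →L[ℂ] X) - A))
    (hPB : PB = (2 * (Real.pi : ℂ) * Complex.I)⁻¹ •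
      ∮ z in C(c, r), Ring.inverse (z • (1 : X →L[ℂ] X) - B)) :
    ∀ x ∈ U, ‖(PA - PB) x‖ ≤ r * C₁ * C₂ * ε * ‖x‖ := by
  intro x hx
  -- after this rewrite, `Ring.inverse (algebraMap ℂ _ z - A)` is `resolvent A z` by `rfl`
  simp only [← Algebra.algebraMap_eq_smul_one] at hA hB hPA hPB
  have hρA : sphere c r ⊆ resolventSet ℂ A := fun z hz => (hA z (mem_sphere_iff_norm.1 hz)).1
  have hρB : sphere c r ⊆ resolventSet ℂ B := fun z hz => (hB z (mem_sphere_iff_norm.1 hz)).1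
  have hint : CircleIntegrable (fun z => resolvent B z * (A - B) * resolvent A z) c r :=
    (((continuousOn_resolvent hρB).mul continuousOn_const).mul
      (continuousOn_resolvent hρA)).circleIntegrable hr.le
  have hPA' : PA = rieszProjection A c r := hPA
  have hPB' : PB = rieszProjection B c r := hPB
  rw [hPA', hPB', rieszProjection_sub_rieszProjection hr.le hρA hρB, smul_apply,
    ContinuousLinearMap.circleIntegral_apply hint]
  refine (circleIntegral.norm_two_pi_i_inv_smul_integral_le_of_norm_le_const
    (C := C₂ * (ε * (C₁ * ‖x‖))) hr.le fun z hz => ?_).trans_eq (by ring)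
  obtain ⟨hzA, hRA : ‖resolvent A z‖ ≤ C₁⟩ := hA z (mem_sphere_iff_norm.1 hz)
  obtain ⟨-, hRB : ‖resolvent B z‖ ≤ C₂⟩ := hB z (mem_sphere_iff_norm.1 hz)
  have hC₂ : 0 ≤ C₂ := (norm_nonneg _).trans hRB
  calc ‖resolvent B z ((A - B) (resolvent A z x))‖
      ≤ C₂ * ‖(A - B) (resolvent A z x)‖ := (resolvent B z).le_of_opNorm_le hRB _
    _ ≤ C₂ * (ε * ‖resolvent A z x‖) := by gcongr; exact hAB _ (resolvent_apply_mem hzA hU hx)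
    _ ≤ C₂ * (ε * (C₁ * ‖x‖)) := by gcongr; exact (resolvent A z).le_of_opNorm_le hRA x

/-- **Restricted perturbation bound for Riesz projections (Lemma 4.2).**
Let `U` be a finite-dimensional subspace invariant under `A`, and suppose
`‖(A − B)x‖ ≤ ε‖x‖` for all `x ∈ U`. If both resolvents of `A` and `B` exist on the
circle `|z − c| = r` with uniform bounds `C₁`, `C₂`, then the Riesz projections satisfy
`‖(P_A − P_B)x‖ ≤ r·C₁·C₂·ε·‖x‖` for all `x ∈ U`. -/
theorem stmt_13 {X : Type*} [NormedAddCommGroup X] [NormedSpace ℂ X] [CompleteSpace X]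
    (A B : X →L[ℂ] X)
    (U : Submodule ℂ X) [FiniteDimensional ℂ U] (hU : ∀ x ∈ U, A x ∈ U)
    (c : ℂ) (r C₁ C₂ ε : ℝ)
    (hr : 0 < r) (hC₁ : 0 < C₁) (hC₂ : 0 < C₂) (hε : 0 ≤ ε)
    (hA : ∀ z : ℂ, ‖z - c‖ = r → IsUnit (z • (1 : X →L[ℂ] X) - A) ∧
      ‖Ring.inverse (z • (1 : X →L[ℂ] X) - A)‖ ≤ C₁)
    (hB : ∀ z : ℂ, ‖z - c‖ = r → IsUnit (z • (1 : X →L[ℂ] X) - B) ∧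
      ‖Ring.inverse (z • (1 : X →L[ℂ] X) - B)‖ ≤ C₂)
    (hAB : ∀ x ∈ U, ‖(A - B) x‖ ≤ ε * ‖x‖)
    (PA PB : X →L[ℂ] X)
    (hPA : PA = (2 * (Real.pi : ℂ) * Complex.I)⁻¹ •
      ∮ z in C(c, r), Ring.inverse (z • (1 : X →L[ℂ] X) - A))
    (hPB : PB = (2 * (Real.pi : ℂ) * Complex.I)⁻¹ •
      ∮ z in C(c, r), Ring.inverse (z • (1 : X →L[ℂ] X) - B)) :
    ∀ x ∈ U, ‖(PA - PB) x‖ ≤ r * C₁ * C₂ * ε * ‖x‖ :=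
  stmt_13_general A B U hU c r C₁ C₂ ε hr hε hA hB hAB PA PB hPA hPB
end

section
/- Let H be a real or complex Hilbert space and let M and N be finite-dimensional subspaces of H with dim M = dim N. If δ(M, N) < 1, then δ(N, M) = δ(M, N), where δ(M, N) := sup_{x ∈ M, ‖x‖ = 1} dist(x, N) (and δ := 0 if M = {0}). In particular the gap δ̂(M, N) := max(δ(M, N), δ(N, M)) equals δ(M, N). -/
/-!
For a unit vector `x ∈ M`, Pythagoras gives `dist(x, N)² = 1 - ‖P_N x‖²`, so `δ(M, N) ≤ d` says
exactly that `A = P_N|_M : M → N` satisfies `√(1 - d²) ‖x‖ ≤ ‖A x‖`. The adjoint of `A` is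
`P_M|_N`, and a lower bound `c > 0` passes from a map between spaces of equal finite dimension to
its adjoint: the map is injective, hence onto, and for `y = A z` we get
`‖y‖² = ⟪z, A* y⟫ ≤ ‖z‖ ‖A* y‖ ≤ c⁻¹ ‖y‖ ‖A* y‖`. Hence `δ(N, M) ≤ δ(M, N)`, and by symmetry
the two agree.
-/

/-- The directed gap `δ(M, N) := sup_{x ∈ M, ‖x‖ = 1} dist(x, N)` between two subspaces
of a normed space (equal to `0` when `M = {0}`, since `Real.sSup ∅ = 0`). -/
noncomputable def subGap {𝕜 X : Type*} [RCLike 𝕜] [NormedAddCommGroup X]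
    [NormedSpace 𝕜 X] (M N : Submodule 𝕜 X) : ℝ :=
  sSup ((fun x => Metric.infDist x (N : Set X)) '' {x : X | x ∈ M ∧ ‖x‖ = 1})

open Metric Module Pointwise

lemma Submodule.infDist_smul₀ {𝕜 X : Type*} [NormedField 𝕜] [NormedAddCommGroup X]
    [NormedSpace 𝕜 X] (N : Submodule 𝕜 X) {c : 𝕜} (hc : c ≠ 0) (x : X) :
    infDist (c • x) N = ‖c‖ * infDist x N := by
  have hN : c • (N : Set X) = N := by
    ext y
    simp [Set.mem_smul_set_iff_inv_smul_mem₀ hc, N.smul_mem_iff (inv_ne_zero hc)]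
  simpa [hN] using _root_.infDist_smul₀ hc (N : Set X) x

section Normed

variable {𝕜 X : Type*} [RCLike 𝕜] [NormedAddCommGroup X] [NormedSpace 𝕜 X]
  (M N : Submodule 𝕜 X)

lemma Submodule.infDist_le_norm (x : X) : infDist x N ≤ ‖x‖ := by
  simpa using infDist_le_dist_of_mem (x := x) N.zero_mem

lemma infDist_le_subGap {x : X} (hxM : x ∈ M) (hx : ‖x‖ = 1) : infDist x N ≤ subGap M N := by
  refine le_csSup ⟨1, ?_⟩ ⟨x, ⟨hxM, hx⟩, rfl⟩
  rintro _ ⟨y, ⟨-, hy⟩, rfl⟩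
  exact hy ▸ N.infDist_le_norm y

lemma subGap_nonneg : 0 ≤ subGap M N :=
  Real.sSup_nonneg (by rintro _ ⟨x, -, rfl⟩; exact infDist_nonneg)

lemma subGap_le_one : subGap M N ≤ 1 :=
  Real.sSup_le (by rintro _ ⟨x, ⟨-, hx⟩, rfl⟩; exact hx ▸ N.infDist_le_norm x) zero_le_one

lemma subGap_le_iff {d : ℝ} (hd : 0 ≤ d) :
    subGap M N ≤ d ↔ ∀ x ∈ M, infDist x N ≤ d * ‖x‖ := by
  refine ⟨fun hle x hxM => ?_, fun h => Real.sSup_le ?_ hd⟩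
  · rcases eq_or_ne x 0 with rfl | hx0
    · simp [infDist_zero_of_mem N.zero_mem]
    set u := (‖x‖ : 𝕜)⁻¹ • x
    have hu : ‖u‖ = 1 := by simp [u, norm_smul, hx0]
    have hxu : x = (‖x‖ : 𝕜) • u := by simp [u, smul_smul, hx0]
    calc infDist x N = infDist ((‖x‖ : 𝕜) • u) N := by rw [← hxu]
      _ = ‖x‖ * infDist u N := by rw [N.infDist_smul₀ (by simpa using hx0)]; simp
      _ ≤ ‖x‖ * d := by
          gcongr; exact (infDist_le_subGap M N (M.smul_mem _ hxM) hu).trans hle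
      _ = d * ‖x‖ := mul_comm _ _
  · rintro _ ⟨x, ⟨hxM, hx⟩, rfl⟩
    simpa [hx] using h x hxM

end Normed

section Inner

variable {𝕜 H : Type*} [RCLike 𝕜] [NormedAddCommGroup H] [InnerProductSpace 𝕜 H]

lemma Submodule.infDist_sq (K : Submodule 𝕜 H) [K.HasOrthogonalProjection] (x : H) :
    infDist x K ^ 2 = ‖x‖ ^ 2 - ‖K.starProjection x‖ ^ 2 := by
  have hdist : infDist x K = ‖Kᗮ.starProjection x‖ := by
    simp only [K.starProjection_orthogonal', infDist_eq_iInf, dist_eq_norm]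
    exact (K.starProjection_minimal x).symm
  rw [hdist, K.norm_sq_eq_add_norm_sq_starProjection x]
  ring

lemma Submodule.infDist_le_mul_norm_iff (K : Submodule 𝕜 H) [K.HasOrthogonalProjection]
    {d : ℝ} (hd₀ : 0 ≤ d) (hd₁ : d ≤ 1) (x : H) :
    infDist x K ≤ d * ‖x‖ ↔ √(1 - d ^ 2) * ‖x‖ ≤ ‖K.starProjection x‖ := by
  rw [← pow_le_pow_iff_left₀ infDist_nonneg (by positivity) two_ne_zero,
    ← pow_le_pow_iff_left₀ (by positivity) (norm_nonneg _) two_ne_zero, K.infDist_sq,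
    mul_pow, mul_pow, Real.sq_sqrt (by nlinarith)]
  constructor <;> intro <;> linarith

lemma LinearMap.mul_norm_le_norm_adjoint_apply {E F : Type*} [NormedAddCommGroup E]
    [InnerProductSpace 𝕜 E] [NormedAddCommGroup F] [InnerProductSpace 𝕜 F]
    [FiniteDimensional 𝕜 E] [FiniteDimensional 𝕜 F] (hdim : finrank 𝕜 E = finrank 𝕜 F)
    (A : E →ₗ[𝕜] F) {c : ℝ} (hA : ∀ x, c * ‖x‖ ≤ ‖A x‖) (y : F) :
    c * ‖y‖ ≤ ‖A.adjoint y‖ := by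
  rcases le_or_gt c 0 with hc | hc
  · exact (mul_nonpos_of_nonpos_of_nonneg hc (norm_nonneg y)).trans (norm_nonneg _)
  have hinj : Function.Injective A := by
    refine (injective_iff_map_eq_zero A).2 fun x hx => norm_eq_zero.1 ?_
    have := hA x
    rw [hx, norm_zero] at this
    exact le_antisymm (nonpos_of_mul_nonpos_right this hc) (norm_nonneg x)
  obtain ⟨z, rfl⟩ := (injective_iff_surjective_of_finrank_eq_finrank hdim).1 hinj y
  have hsq : ‖A z‖ ^ 2 ≤ ‖z‖ * ‖A.adjoint (A z)‖ := by
    rw [← inner_self_eq_norm_sq (𝕜 := 𝕜), ← A.adjoint_inner_right]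
    exact (RCLike.re_le_norm _).trans (norm_inner_le_norm _ _)
  rcases (norm_nonneg (A z)).eq_or_lt with h0 | hpos
  · rw [← h0, mul_zero]
    exact norm_nonneg _
  refine le_of_mul_le_mul_left ?_ hpos
  calc ‖A z‖ * (c * ‖A z‖) = c * ‖A z‖ ^ 2 := by ring
    _ ≤ c * (‖z‖ * ‖A.adjoint (A z)‖) := by gcongr
    _ = c * ‖z‖ * ‖A.adjoint (A z)‖ := by ring
    _ ≤ ‖A z‖ * ‖A.adjoint (A z)‖ := by gcongr; exact hA z

lemma Submodule.adjoint_orthogonalProjectionOnto_comp_subtype (M N : Submodule 𝕜 H)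
    [FiniteDimensional 𝕜 M] [FiniteDimensional 𝕜 N] :
    LinearMap.adjoint (N.orthogonalProjectionOnto.toLinearMap ∘ₗ M.subtype) =
      M.orthogonalProjectionOnto.toLinearMap ∘ₗ N.subtype := by
  refine ((LinearMap.eq_adjoint_iff _ _).2 fun x y => ?_).symm
  simp

theorem subGap_le_subGap_of_finrank_eq (M N : Submodule 𝕜 H) [FiniteDimensional 𝕜 M]
    [FiniteDimensional 𝕜 N] (hdim : finrank 𝕜 M = finrank 𝕜 N) : subGap N M ≤ subGap M N := by
  set d := subGap M N
  have hd₀ : 0 ≤ d := subGap_nonneg M N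
  have hd₁ : d ≤ 1 := subGap_le_one M N
  set A := N.orthogonalProjectionOnto.toLinearMap ∘ₗ M.subtype
  have hA : ∀ x : M, √(1 - d ^ 2) * ‖x‖ ≤ ‖A x‖ := fun x =>
    (N.infDist_le_mul_norm_iff hd₀ hd₁ x).1 ((subGap_le_iff M N hd₀).1 le_rfl x x.2)
  have hA' := A.mul_norm_le_norm_adjoint_apply hdim hA
  rw [M.adjoint_orthogonalProjectionOnto_comp_subtype N] at hA'
  exact (subGap_le_iff N M hd₀).2 fun y hy =>
    (M.infDist_le_mul_norm_iff hd₀ hd₁ y).2 (hA' ⟨y, hy⟩)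

end Inner

theorem stmt_17_general {𝕜 H : Type*} [RCLike 𝕜] [NormedAddCommGroup H] [InnerProductSpace 𝕜 H]
    (M N : Submodule 𝕜 H) [FiniteDimensional 𝕜 M] [FiniteDimensional 𝕜 N]
    (hdim : Module.finrank 𝕜 M = Module.finrank 𝕜 N) :
    subGap N M = subGap M N ∧ max (subGap M N) (subGap N M) = subGap M N := by
  have hsymm : subGap N M = subGap M N :=
    le_antisymm (subGap_le_subGap_of_finrank_eq M N hdim)
      (subGap_le_subGap_of_finrank_eq N M hdim.symm)
  exact ⟨hsymm, by rw [hsymm, max_self]⟩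

/-- **Symmetry of the gap for equal-dimensional subspaces (Kato).**
Let `H` be a real or complex Hilbert space and `M, N` finite-dimensional subspaces with
`dim M = dim N`. If `δ(M, N) < 1` then `δ(N, M) = δ(M, N)`; in particular the gap
`δ̂(M, N) = max(δ(M, N), δ(N, M))` equals `δ(M, N)`. -/
theorem stmt_17 {𝕜 H : Type*} [RCLike 𝕜] [NormedAddCommGroup H] [InnerProductSpace 𝕜 H]
    (M N : Submodule 𝕜 H) [FiniteDimensional 𝕜 M] [FiniteDimensional 𝕜 N]
    (hdim : Module.finrank 𝕜 M = Module.finrank 𝕜 N)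
    (h : subGap M N < 1) :
    subGap N M = subGap M N ∧ max (subGap M N) (subGap N M) = subGap M N :=
  stmt_17_general M N hdim
end
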